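/- Let B, C, D be random vectors and W the Moore–Penrose inverse of Var(D). Then the adjusted covariance can be computed with only one residual: Cov_D(B,C) = Cov(B, C − E_D(C)). -/

import Mathlib

open MeasureTheory Matrix

variable {Ω : Type*}

/-- The covariance matrix of two random vectors `B` (dimension `m`) and `D` (dimension `n`):
the `(i,j)` entry is `E[Bᵢ·Dⱼ] − E[Bᵢ]·E[Dⱼ]`. -/
noncomputable def cov [MeasurableSpace Ω] (μ : Measure Ω) {m n : ℕ}
    (B : Fin m → Ω → ℝ) (D : Fin n → Ω → ℝ) : Matrix (Fin m) (Fin n) ℝ :=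
  Matrix.of fun i j =>
    (∫ ω, B i ω * D j ω ∂μ) - (∫ ω, B i ω ∂μ) * (∫ ω, D j ω ∂μ)

/-- `W` is a Moore–Penrose inverse of `V`. -/
def IsMoorePenrose {m n : ℕ} (V : Matrix (Fin m) (Fin n) ℝ)
    (W : Matrix (Fin n) (Fin m) ℝ) : Prop :=
  V * W * V = V ∧ W * V * W = W ∧ (V * W)ᵀ = V * W ∧ (W * V)ᵀ = W * V

/-- The adjusted expectation `E_D(B)` (computed with the matrix `W`, intended to be the
Moore–Penrose inverse of `Var(D)`): the `i`-th component is
`E[Bᵢ] + Σ_j (Cov(B,D)·W)_{ij}·(Dⱼ − E[Dⱼ])`. -/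
noncomputable def adjExp [MeasurableSpace Ω] (μ : Measure Ω) {m n : ℕ}
    (B : Fin m → Ω → ℝ) (D : Fin n → Ω → ℝ)
    (W : Matrix (Fin n) (Fin n) ℝ) : Fin m → Ω → ℝ :=
  fun i ω => (∫ ω', B i ω' ∂μ) + ∑ j, (cov μ B D * W) i j * (D j ω - ∫ ω', D j ω' ∂μ)

/-- The adjusted covariance `Cov_D(B,C) = Cov(B − E_D(B), C − E_D(C))`. -/
noncomputable def adjCov [MeasurableSpace Ω] (μ : Measure Ω) {m p n : ℕ}
    (B : Fin m → Ω → ℝ) (C : Fin p → Ω → ℝ) (D : Fin n → Ω → ℝ)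
    (W : Matrix (Fin n) (Fin n) ℝ) : Matrix (Fin m) (Fin p) ℝ :=
  cov μ (fun i ω => B i ω - adjExp μ B D W i ω) (fun j ω => C j ω - adjExp μ C D W j ω)

/-!
Write `R = C − E_D(C)` and `V = Var(D)`. Covariance is bilinear and blind to constants, so
`Cov_D(B,C) = Cov(B,R) − P_D(B)·Cov(D,R)` and `Cov(D,R) = Cov(D,C) − V·(Cov(C,D)·W)ᵀ`. The
latter vanishes because `Cov(C,D)·W·V = Cov(C,D)`: since `V·(1 − W·V) = 0`, the vector `D` has
zero variance along the columns of `1 − W·V`, so it is a.s. constant there and uncorrelated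
with `C`.
-/

open ProbabilityTheory

section Covariance

variable [MeasurableSpace Ω] {μ : Measure Ω}

lemma covariance_eq_zero_of_variance_eq_zero [IsFiniteMeasure μ] {X Y : Ω → ℝ}
    (hY : MemLp Y 2 μ) (h : Var[Y; μ] = 0) : cov[X, Y; μ] = 0 := by
  refine integral_eq_zero_of_ae ?_
  filter_upwards [ae_eq_integral_of_variance_eq_zero hY h] with ω hω
  simp [hω]

variable {m n p : ℕ}

lemma memLp_linComb {q : ENNReal} {Y : Fin n → Ω → ℝ} (hY : ∀ j, MemLp (Y j) q μ)
    (A : Matrix (Fin p) (Fin n) ℝ) (k : Fin p) : MemLp (fun ω => ∑ l, A k l * Y l ω) q μ :=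
  memLp_finsetSum _ fun l _ => (hY l).const_mul _

lemma cov_transpose (X : Fin m → Ω → ℝ) (Y : Fin n → Ω → ℝ) :
    (cov μ X Y)ᵀ = cov μ Y X := by
  ext i j
  simp [cov, mul_comm]

variable [IsProbabilityMeasure μ]

lemma cov_apply_eq_covariance {X : Fin m → Ω → ℝ} {Y : Fin n → Ω → ℝ} {i : Fin m} {j : Fin n}
    (hX : MemLp (X i) 2 μ) (hY : MemLp (Y j) 2 μ) :
    cov μ X Y i j = cov[X i, Y j; μ] := by
  simp [cov, covariance_eq_sub hX hY]

lemma cov_eq_zero_of_cov_self_eq_zero {X : Fin m → Ω → ℝ} {Y : Fin n → Ω → ℝ}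
    (hX : ∀ i, MemLp (X i) 2 μ) (hY : ∀ j, MemLp (Y j) 2 μ) (h : cov μ Y Y = 0) :
    cov μ X Y = 0 := by
  ext i j
  refine (cov_apply_eq_covariance (hX i) (hY j)).trans
    (covariance_eq_zero_of_variance_eq_zero (hY j) ?_)
  rw [← covariance_self (hY j).aemeasurable, ← cov_apply_eq_covariance (hY j) (hY j), h,
    Matrix.zero_apply]

lemma cov_linComb_right {X : Fin m → Ω → ℝ} {Y : Fin n → Ω → ℝ}
    (hX : ∀ i, MemLp (X i) 2 μ) (hY : ∀ j, MemLp (Y j) 2 μ) (A : Matrix (Fin p) (Fin n) ℝ) :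
    cov μ X (fun k ω => ∑ l, A k l * Y l ω) = cov μ X Y * Aᵀ := by
  ext i k
  rw [cov_apply_eq_covariance (hX i) (memLp_linComb hY A k),
    covariance_fun_sum_right (fun l => (hY l).const_mul _) (hX i), mul_apply]
  refine Finset.sum_congr rfl fun l _ => ?_
  rw [covariance_const_mul_right, cov_apply_eq_covariance (hX i) (hY l), transpose_apply,
    mul_comm]

lemma cov_add_const_right {X : Fin m → Ω → ℝ} {Y : Fin n → Ω → ℝ}
    (hX : ∀ i, MemLp (X i) 2 μ) (hY : ∀ j, MemLp (Y j) 2 μ) (c : Fin n → ℝ) :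
    cov μ X (fun j ω => Y j ω + c j) = cov μ X Y := by
  ext i j
  rw [cov_apply_eq_covariance (hX i) ((hY j).add (memLp_const _)),
    covariance_add_const_right ((hY j).integrable one_le_two),
    cov_apply_eq_covariance (hX i) (hY j)]

lemma cov_sub_right {X : Fin m → Ω → ℝ} {Y Z : Fin n → Ω → ℝ}
    (hX : ∀ i, MemLp (X i) 2 μ) (hY : ∀ j, MemLp (Y j) 2 μ) (hZ : ∀ j, MemLp (Z j) 2 μ) :
    cov μ X (fun j ω => Y j ω - Z j ω) = cov μ X Y - cov μ X Z := by
  ext i j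
  rw [cov_apply_eq_covariance (hX i) ((hY j).sub (hZ j)),
    covariance_fun_sub_right (hX i) (hY j) (hZ j), Matrix.sub_apply,
    cov_apply_eq_covariance (hX i) (hY j), cov_apply_eq_covariance (hX i) (hZ j)]

end Covariance

section AdjustedExpectation

variable [MeasurableSpace Ω] {μ : Measure Ω} {m n p : ℕ}

lemma sub_adjExp_eq (C : Fin p → Ω → ℝ) (D : Fin n → Ω → ℝ) (W : Matrix (Fin n) (Fin n) ℝ)
    (j : Fin p) (ω : Ω) :
    C j ω - adjExp μ C D W j ω = (C j ω - ∑ l, (cov μ C D * W) j l * D l ω) +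
      (∑ l, (cov μ C D * W) j l * ∫ ω', D l ω' ∂μ - ∫ ω', C j ω' ∂μ) := by
  simp only [adjExp, mul_sub, Finset.sum_sub_distrib]
  ring

variable {B : Fin m → Ω → ℝ} {C : Fin p → Ω → ℝ} {D : Fin n → Ω → ℝ}

lemma memLp_sub_adjExp [IsFiniteMeasure μ] (hC : ∀ j, MemLp (C j) 2 μ)
    (hD : ∀ l, MemLp (D l) 2 μ) (W : Matrix (Fin n) (Fin n) ℝ) (j : Fin p) :
    MemLp (fun ω => C j ω - adjExp μ C D W j ω) 2 μ := by
  rw [funext (sub_adjExp_eq (μ := μ) C D W j)]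
  exact ((hC j).sub (memLp_linComb hD _ j)).add (memLp_const _)

variable [IsProbabilityMeasure μ]

lemma cov_sub_adjExp_right {X : Fin m → Ω → ℝ} (hX : ∀ i, MemLp (X i) 2 μ)
    (hC : ∀ j, MemLp (C j) 2 μ) (hD : ∀ l, MemLp (D l) 2 μ) (W : Matrix (Fin n) (Fin n) ℝ) :
    cov μ X (fun j ω => C j ω - adjExp μ C D W j ω) =
      cov μ X C - cov μ X D * (cov μ C D * W)ᵀ := by
  simp_rw [sub_adjExp_eq]
  rw [cov_add_const_right (Y := fun j ω => C j ω - ∑ l, (cov μ C D * W) j l * D l ω) hX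
      (fun j => (hC j).sub (memLp_linComb hD _ j)),
    cov_sub_right hX hC (memLp_linComb hD _), cov_linComb_right hX hD]

lemma cov_sub_adjExp_left {Y : Fin p → Ω → ℝ} (hB : ∀ i, MemLp (B i) 2 μ)
    (hY : ∀ j, MemLp (Y j) 2 μ) (hD : ∀ l, MemLp (D l) 2 μ) (W : Matrix (Fin n) (Fin n) ℝ) :
    cov μ (fun i ω => B i ω - adjExp μ B D W i ω) Y = cov μ B Y - cov μ B D * W * cov μ D Y := by
  rw [← cov_transpose, cov_sub_adjExp_right hY hB hD, transpose_sub, transpose_mul,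
    transpose_transpose, cov_transpose, cov_transpose]

end AdjustedExpectation

section PseudoInverse

variable [MeasurableSpace Ω] {μ : Measure Ω} [IsProbabilityMeasure μ] {n p : ℕ}
  {C : Fin p → Ω → ℝ} {D : Fin n → Ω → ℝ} {W : Matrix (Fin n) (Fin n) ℝ}

lemma cov_mul_mul_cov_self (hC : ∀ j, MemLp (C j) 2 μ) (hD : ∀ l, MemLp (D l) 2 μ)
    (hW : cov μ D D * W * cov μ D D = cov μ D D) :
    cov μ C D * W * cov μ D D = cov μ C D := by
  set M := 1 - W * cov μ D D
  have hVM : cov μ D D * M = 0 := by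
    rw [Matrix.mul_sub, Matrix.mul_one, ← Matrix.mul_assoc, hW, sub_self]
  have hZ := memLp_linComb hD Mᵀ
  have hZZ : cov μ (fun k ω => ∑ l, Mᵀ k l * D l ω) (fun k ω => ∑ l, Mᵀ k l * D l ω) = 0 := by
    rw [cov_linComb_right hZ hD, ← cov_transpose, cov_linComb_right hD hD, transpose_transpose,
      hVM, transpose_zero, Matrix.zero_mul]
  have hCM := cov_eq_zero_of_cov_self_eq_zero hC hZ hZZ
  rw [cov_linComb_right hC hD, transpose_transpose, Matrix.mul_sub, Matrix.mul_one, sub_eq_zero,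
    ← Matrix.mul_assoc] at hCM
  exact hCM.symm

lemma cov_sub_adjExp_eq_zero (hC : ∀ j, MemLp (C j) 2 μ) (hD : ∀ l, MemLp (D l) 2 μ)
    (hW : cov μ D D * W * cov μ D D = cov μ D D) :
    cov μ D (fun j ω => C j ω - adjExp μ C D W j ω) = 0 := by
  rw [cov_sub_adjExp_right hD hC hD, sub_eq_zero]
  conv_lhs => rw [← cov_transpose C D, ← cov_mul_mul_cov_self hC hD hW]
  rw [transpose_mul, cov_transpose]

end PseudoInverse

/-- the adjusted covariance can be computed with only one residual:
`Cov_D(B,C) = Cov(B, C − E_D(C))`, where `W` is the Moore–Penrose inverse of `Var(D)`. -/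
theorem adjCov_eq_cov_one_residual [MeasurableSpace Ω] (μ : Measure Ω)
    [IsProbabilityMeasure μ] {m p n : ℕ}
    (B : Fin m → Ω → ℝ) (C : Fin p → Ω → ℝ) (D : Fin n → Ω → ℝ)
    (hB : ∀ i, Measurable (B i) ∧ MemLp (B i) 2 μ)
    (hC : ∀ i, Measurable (C i) ∧ MemLp (C i) 2 μ)
    (hD : ∀ i, Measurable (D i) ∧ MemLp (D i) 2 μ)
    (W : Matrix (Fin n) (Fin n) ℝ) (hW : IsMoorePenrose (cov μ D D) W) :
    adjCov μ B C D W = cov μ B (fun j ω => C j ω - adjExp μ C D W j ω) := by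
  have hB₂ i := (hB i).2
  have hC₂ i := (hC i).2
  have hD₂ i := (hD i).2
  rw [adjCov, cov_sub_adjExp_left hB₂ (memLp_sub_adjExp hC₂ hD₂ W) hD₂,
    cov_sub_adjExp_eq_zero hC₂ hD₂ hW.1, Matrix.mul_zero, sub_zero]
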